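/- arXiv:2201.12037 — 7 statements merged into one kernel-verified Lean document; each statement's English description precedes it below -/
import Mathlib

section
/- If the linear system x' = A(t)x admits an algebraic dichotomy with respect to a growth rate μ, then the only bounded solution of x' = A(t)x on ℝ is the zero solution; that is, every solution x : ℝ → ℝⁿ of x' = A(t)x with sup_{t∈ℝ} ‖x(t)‖ < ∞ satisfies x(t) = 0 for all t ∈ ℝ. -/
/-!
A solution satisfies `x t = T t s (x s)` for all `s`, by uniqueness for the linear equation.
Splitting `x t = P t (x t) + Q t (x t)` and using the invariance of the projections, the stable part
is `T t s P s (x s)`, of norm at most `K (μ t / μ s)^(-α) sup ‖x‖`, which tends to `0` as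
`s → -∞` since `μ s → 0`; symmetrically the unstable part tends to `0` as `s → +∞`.
-/

open MeasureTheory Filter Set
open scoped Topology

section LinearODE

variable {E : Type*} [NormedAddCommGroup E] [NormedSpace ℝ E]

theorem ODE_solution_unique_linear {A : ℝ → E →L[ℝ] E} (hA : ∃ C, ∀ t, ‖A t‖ ≤ C)
    {x y : ℝ → E} (hx : ∀ t, HasDerivAt x (A t (x t)) t) (hy : ∀ t, HasDerivAt y (A t (y t)) t)
    {t₀ : ℝ} (h : x t₀ = y t₀) : x = y := by
  obtain ⟨C, hC⟩ := hA
  have hLip : ∀ t, LipschitzWith C.toNNReal (A t) := fun t =>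
    (A t).lipschitz.weaken <| by
      rw [← NNReal.coe_le_coe, coe_nnnorm, Real.coe_toNNReal']
      exact (hC t).trans (le_max_left _ _)
  exact ODE_solution_unique_univ (s := fun _ => univ) (fun t => (hLip t).lipschitzOnWith)
    (fun t => ⟨hx t, trivial⟩) (fun t => ⟨hy t, trivial⟩) h

theorem eq_evolution_of_hasDerivAt {A : ℝ → E →L[ℝ] E} (hA : ∃ C, ∀ t, ‖A t‖ ≤ C)
    {T : ℝ → ℝ → E →L[ℝ] E} (hT_id : ∀ t, T t t = ContinuousLinearMap.id ℝ E)
    (hT_sol : ∀ s x₀ t, HasDerivAt (fun r => T r s x₀) (A t (T t s x₀)) t)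
    {x : ℝ → E} (hx : ∀ t, HasDerivAt x (A t (x t)) t) (s t : ℝ) : x t = T t s (x s) :=
  congrFun (ODE_solution_unique_linear hA hx (hT_sol s (x s)) (t₀ := s) (by simp [hT_id])) t

end LinearODE

theorem ContinuousLinearMap.comp_id_sub_eq {E F : Type*} [NormedAddCommGroup E]
    [NormedSpace ℝ E] [NormedAddCommGroup F] [NormedSpace ℝ F] {T : E →L[ℝ] F}
    {P : E →L[ℝ] E} {P' : F →L[ℝ] F} (h : T.comp P = P'.comp T) :
    T.comp (ContinuousLinearMap.id ℝ E - P) = (ContinuousLinearMap.id ℝ F - P').comp T := by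
  rw [comp_sub, sub_comp, comp_id, id_comp, h]

theorem eq_zero_of_eventually_eq_apply_of_norm_le_rpow_neg {E F ι : Type*}
    [NormedAddCommGroup E] [NormedSpace ℝ E] [NormedAddCommGroup F] [NormedSpace ℝ F]
    {l : Filter ι} [l.NeBot] {L : ι → E →L[ℝ] F} {u : ι → E} {r : ι → ℝ} {y : F} {K α C : ℝ}
    (hα : 0 < α) (hr : Tendsto r l atTop) (hL : ∀ᶠ i in l, ‖L i‖ ≤ K * r i ^ (-α))
    (hu : ∀ i, ‖u i‖ ≤ C) (hy : ∀ᶠ i in l, y = L i (u i)) : y = 0 := by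
  have hbound : ∀ᶠ i in l, ‖y‖ ≤ K * r i ^ (-α) * C := by
    filter_upwards [hL, hy] with i hLi rfl
    calc ‖L i (u i)‖ ≤ ‖L i‖ * ‖u i‖ := (L i).le_opNorm _
      _ ≤ K * r i ^ (-α) * C :=
        mul_le_mul hLi (hu i) (norm_nonneg _) ((norm_nonneg _).trans hLi)
  have hlim : Tendsto (fun i => K * r i ^ (-α) * C) l (𝓝 0) := by
    simpa using (((tendsto_rpow_neg_atTop hα).comp hr).const_mul K).mul_const C
  exact norm_le_zero_iff.mp (ge_of_tendsto hlim hbound)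

theorem tendsto_const_div_atTop_of_tendsto_nhds_zero {ι : Type*} {l : Filter ι} {f : ι → ℝ}
    (hf_pos : ∀ i, 0 < f i) (hf : Tendsto f l (𝓝 0)) {c : ℝ} (hc : 0 < c) :
    Tendsto (fun i => c / f i) l atTop := by
  have hf' : Tendsto f l (𝓝[>] 0) :=
    tendsto_nhdsWithin_iff.mpr ⟨hf, Eventually.of_forall hf_pos⟩
  simpa [div_eq_mul_inv] using hf'.inv_tendsto_nhdsGT_zero.const_mul_atTop hc

theorem algebraic_dichotomy_bounded_solution_zero_general {n : ℕ}
    (μ : ℝ → ℝ)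
    (hμ_pos : ∀ t, 0 < μ t)
    (hμ_bot : Filter.Tendsto μ Filter.atBot (nhds 0))
    (hμ_top : Filter.Tendsto μ Filter.atTop Filter.atTop)
    (A : ℝ → EuclideanSpace ℝ (Fin n) →L[ℝ] EuclideanSpace ℝ (Fin n))
    (hA_bdd : ∃ C, ∀ t, ‖A t‖ ≤ C)
    (T : ℝ → ℝ → EuclideanSpace ℝ (Fin n) →L[ℝ] EuclideanSpace ℝ (Fin n))
    (hT_id : ∀ t, T t t = ContinuousLinearMap.id ℝ (EuclideanSpace ℝ (Fin n)))
    (hT_sol : ∀ s x₀ t, HasDerivAt (fun r => T r s x₀) (A t (T t s x₀)) t)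
    (P : ℝ → EuclideanSpace ℝ (Fin n) →L[ℝ] EuclideanSpace ℝ (Fin n))
    (K α : ℝ) (hα : 0 < α)
    (h_commute : ∀ t s, (T t s).comp (P s) = (P t).comp (T t s))
    (h_dichP : ∀ t s, s ≤ t → ‖(T t s).comp (P s)‖ ≤ K * (μ t / μ s) ^ (-α))
    (h_dichQ : ∀ t s, t ≤ s →
      ‖(T t s).comp (ContinuousLinearMap.id ℝ (EuclideanSpace ℝ (Fin n)) - P s)‖ ≤ K * (μ s / μ t) ^ (-α))
    :
    ∀ x : ℝ → EuclideanSpace ℝ (Fin n),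
      (∀ t, HasDerivAt x (A t (x t)) t) →
      (∃ C, ∀ t, ‖x t‖ ≤ C) →
      ∀ t, x t = 0 := by
  intro x hx ⟨C, hC⟩ t
  have hflow := eq_evolution_of_hasDerivAt hA_bdd hT_id hT_sol hx
  have hstable : P t (x t) = 0 :=
    eq_zero_of_eventually_eq_apply_of_norm_le_rpow_neg hα
      (tendsto_const_div_atTop_of_tendsto_nhds_zero hμ_pos hμ_bot (hμ_pos t))
      (eventually_atBot.mpr ⟨t, h_dichP t⟩) hC
      (Eventually.of_forall fun s => by
        rw [h_commute, ContinuousLinearMap.comp_apply, ← hflow s t])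
  have hunstable : x t - P t (x t) = 0 :=
    eq_zero_of_eventually_eq_apply_of_norm_le_rpow_neg hα
      (hμ_top.atTop_div_const (hμ_pos t)) (eventually_atTop.mpr ⟨t, h_dichQ t⟩) hC
      (Eventually.of_forall fun s => by
        rw [ContinuousLinearMap.comp_id_sub_eq (h_commute t s), ContinuousLinearMap.comp_apply, ← hflow s t]
        rfl)
  rwa [hstable, sub_zero] at hunstable

theorem algebraic_dichotomy_bounded_solution_zero {n : ℕ}
    (μ : ℝ → ℝ)
    (hμ_pos : ∀ t, 0 < μ t)
    (hμ_mono : StrictMono μ)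
    (hμ_zero : μ 0 = 1)
    (hμ_bot : Filter.Tendsto μ Filter.atBot (nhds 0))
    (hμ_top : Filter.Tendsto μ Filter.atTop Filter.atTop)
    (A : ℝ → EuclideanSpace ℝ (Fin n) →L[ℝ] EuclideanSpace ℝ (Fin n))
    (hA_cont : Continuous A)
    (hA_bdd : ∃ C, ∀ t, ‖A t‖ ≤ C)
    (T : ℝ → ℝ → EuclideanSpace ℝ (Fin n) →L[ℝ] EuclideanSpace ℝ (Fin n))
    (hT_id : ∀ t, T t t = ContinuousLinearMap.id ℝ (EuclideanSpace ℝ (Fin n)))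
    (hT_cocycle : ∀ t τ s, (T t τ).comp (T τ s) = T t s)
    (hT_sol : ∀ s x₀ t, HasDerivAt (fun r => T r s x₀) (A t (T t s x₀)) t)
    (P : ℝ → EuclideanSpace ℝ (Fin n) →L[ℝ] EuclideanSpace ℝ (Fin n))
    (hP_proj : ∀ s, (P s).comp (P s) = P s)
    (K α : ℝ) (hK : 0 < K) (hα : 0 < α)
    (h_commute : ∀ t s, (T t s).comp (P s) = (P t).comp (T t s))
    (h_dichP : ∀ t s, s ≤ t → ‖(T t s).comp (P s)‖ ≤ K * (μ t / μ s) ^ (-α))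
    (h_dichQ : ∀ t s, t ≤ s →
      ‖(T t s).comp (ContinuousLinearMap.id ℝ (EuclideanSpace ℝ (Fin n)) - P s)‖ ≤ K * (μ s / μ t) ^ (-α))
    :
    ∀ x : ℝ → EuclideanSpace ℝ (Fin n),
      (∀ t, HasDerivAt x (A t (x t)) t) →
      (∃ C, ∀ t, ‖x t‖ ≤ C) →
      ∀ t, x t = 0 :=
  algebraic_dichotomy_bounded_solution_zero_general μ hμ_pos hμ_bot hμ_top A hA_bdd T hT_id hT_sol P
    K α hα h_commute h_dichP h_dichQ
end

section
/- Suppose the linear system x' = A(t)x admits an algebraic dichotomy with projections P(s) and constants K > 0, α > 0 with respect to a growth rate μ, and f satisfies ‖f(t,x)‖ ≤ β μ'(t)/μ(t) and ‖f(t,x₁) − f(t,x₂)‖ ≤ γ (μ'(t)/μ(t)) ‖x₁ − x₂‖ with 6Kγα⁻¹ < 1. Let x(t) be any solution of x' = A(t)x + f(t,x). Then the system Z'(t) = A(t)Z(t) + f(t, x(t) + Z(t)) − f(t, x(t)) has Z ≡ 0 as its unique bounded solution on ℝ: every solution Z : ℝ → ℝⁿ with sup_{t∈ℝ} ‖Z(t)‖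 < ∞ is identically zero. -/
open MeasureTheory Filter Set

open scoped Topology

/-!
Put `c = sup ‖Z‖` and `g t = f(t, x t + Z t) - f(t, x t)`, so that `Z' = A Z + g` and
`‖g τ‖ ≤ γ c μ'(τ)/μ(τ)`. Variation of constants gives, for every `s`,
`P t (Z t) = T(t,s) P(s) Z(s) + ∫ₛᵗ T(t,τ) P(τ) g(τ) dτ`. As `s → -∞` the first term tends to `0`
by the dichotomy, while the integral is at most `K γ c / α`, because
`∫ₛᵗ (μ τ / μ t)^α · μ'(τ)/μ(τ) dτ = (1 - (μ s / μ t)^α) / α`. The same argument for `Q = I - P`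
with `s → +∞` yields `c ≤ 2 K γ α⁻¹ c`, hence `c = 0`.
-/

theorem hasDerivAt_clm_of_forall_apply {𝕜 E F : Type*} [NontriviallyNormedField 𝕜]
    [CompleteSpace 𝕜] [NormedAddCommGroup E] [NormedSpace 𝕜 E] [FiniteDimensional 𝕜 E]
    [NormedAddCommGroup F] [NormedSpace 𝕜 F] {T : 𝕜 → E →L[𝕜] F} {D : E →L[𝕜] F} {t : 𝕜}
    (h : ∀ v, HasDerivAt (fun r => T r v) (D v) t) : HasDerivAt T D t := by
  let d := Module.finrank 𝕜 E
  let e₁ : E ≃L[𝕜] (Fin d → 𝕜) := .ofFinrankEq (Module.finrank_fin_fun 𝕜).symm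
  let e := (e₁.arrowCongr (1 : F ≃L[𝕜] F)).trans (ContinuousLinearEquiv.piRing (Fin d))
  have he : HasDerivAt (fun r => e (T r)) (e D) t := hasDerivAt_pi.2 fun i => h _
  simpa [Function.comp_def] using e.symm.hasFDerivAt.comp_hasDerivAt t he

theorem HasDerivAt.of_mul_eq_one {𝕜 R : Type*} [NontriviallyNormedField 𝕜] [NormedRing R]
    [NormedAlgebra 𝕜 R] [HasSummableGeomSeries R] {U V : 𝕜 → R} {U' : R} {t : 𝕜}
    (hUV : ∀ r, U r * V r = 1) (hVU : ∀ r, V r * U r = 1) (hU : HasDerivAt U U' t) :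
    HasDerivAt V (-(V t * U' * V t)) t := by
  have hV : Ring.inverse ∘ U = V := funext fun r => Ring.inverse_unit ⟨U r, V r, hUV r, hVU r⟩
  simpa [← hV] using
    (hasFDerivAt_ringInverse (𝕜 := 𝕜) ⟨U t, V t, hUV t, hVU t⟩).comp_hasDerivAt t hU

theorem IntervalIntegrable.of_hasDerivAt_of_norm_le {E : Type*} [NormedAddCommGroup E]
    [NormedSpace ℝ E] [CompleteSpace E] {F F' : ℝ → E} {φ : ℝ → ℝ} {a b : ℝ}
    (hF : ∀ τ, HasDerivAt F (F' τ) τ) (hφ : IntervalIntegrable φ volume a b)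
    (hle : ∀ τ ∈ uIcc a b, ‖F' τ‖ ≤ φ τ) : IntervalIntegrable F' volume a b := by
  obtain rfl : F' = deriv F := funext fun τ => (hF τ).deriv.symm
  refine hφ.mono_fun' (stronglyMeasurable_deriv F).aestronglyMeasurable ?_
  exact (ae_restrict_mem measurableSet_uIoc).mono fun τ hτ => hle τ (uIoc_subset_uIcc hτ)

theorem intervalIntegrable_of_hasDerivAt_of_nonneg {G G' : ℝ → ℝ}
    (hG : ∀ τ, HasDerivAt G (G' τ) τ) (hG' : ∀ τ, 0 ≤ G' τ) (a b : ℝ) :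
    IntervalIntegrable G' volume a b :=
  intervalIntegral.intervalIntegrable_deriv_of_nonneg
    (continuousOn_of_forall_continuousAt fun τ _ => (hG τ).continuousAt)
    (fun τ _ => hG τ) (fun τ _ => hG' τ)

section Evolution

variable {E : Type*} [NormedAddCommGroup E] [NormedSpace ℝ E]

structure IsEvolutionOperator (A : ℝ → E →L[ℝ] E) (T : ℝ → ℝ → E →L[ℝ] E) : Prop where
  self : ∀ t, T t t = ContinuousLinearMap.id ℝ E
  comp : ∀ t τ s, (T t τ).comp (T τ s) = T t s
  hasDerivAt : ∀ s v t, HasDerivAt (fun r => T r s v) (A t (T t s v)) t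

variable {A : ℝ → E →L[ℝ] E} {T : ℝ → ℝ → E →L[ℝ] E}

theorem intervalIntegrable_evolution_apply [CompleteSpace E] {Z g : ℝ → E} {ω : ℝ → ℝ}
    {t a b : ℝ} (hT : Continuous fun r => T t r)
    (hderiv : ∀ τ, HasDerivAt (fun r => T t r (Z r)) (T t τ (g τ)) τ)
    (hω : IntervalIntegrable ω volume a b) (hg : ∀ τ, ‖g τ‖ ≤ ω τ) :
    IntervalIntegrable (fun τ => T t τ (g τ)) volume a b := by
  obtain ⟨M, hM⟩ := (isCompact_uIcc (a := a) (b := b)).exists_bound_of_continuousOn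
    hT.continuousOn
  have hM₀ : 0 ≤ M := (norm_nonneg _).trans (hM a left_mem_uIcc)
  refine IntervalIntegrable.of_hasDerivAt_of_norm_le hderiv (hω.const_mul M) fun τ hτ => ?_
  exact ((T t τ).le_opNorm _).trans (mul_le_mul (hM τ hτ) (hg τ) (norm_nonneg _) hM₀)

theorem variation_of_constants [CompleteSpace E]
    (hT_id : ∀ t, T t t = ContinuousLinearMap.id ℝ E) {Z g : ℝ → E} {s t : ℝ}
    (hderiv : ∀ τ, HasDerivAt (fun r => T t r (Z r)) (T t τ (g τ)) τ)
    (hint : IntervalIntegrable (fun τ => T t τ (g τ)) volume s t) :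
    Z t = T t s (Z s) + ∫ τ in s..t, T t τ (g τ) := by
  rw [intervalIntegral.integral_eq_sub_of_hasDerivAt (fun τ _ => hderiv τ) hint, hT_id]
  simp

namespace IsEvolutionOperator

theorem hasDerivAt_snd [FiniteDimensional ℝ E] (hT : IsEvolutionOperator A T) (t τ : ℝ) :
    HasDerivAt (fun r => T t r) (-(T t τ).comp (A τ)) τ := by
  have := FiniteDimensional.complete ℝ E
  have hinv a b : T a b * T b a = 1 := by
    rw [ContinuousLinearMap.mul_def, hT.comp, hT.self, ContinuousLinearMap.one_def]
  have hU : HasDerivAt (fun r => T r t) ((A τ).comp (T τ t)) τ :=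
    hasDerivAt_clm_of_forall_apply fun v => hT.hasDerivAt t v τ
  refine (hU.of_mul_eq_one (fun r => hinv r t) (fun r => hinv t r)).congr_deriv ?_
  rw [ContinuousLinearMap.mul_def, ContinuousLinearMap.mul_def, ContinuousLinearMap.comp_assoc,
    ContinuousLinearMap.comp_assoc, hT.comp, hT.self, ContinuousLinearMap.comp_id]

theorem hasDerivAt_apply_snd [FiniteDimensional ℝ E] (hT : IsEvolutionOperator A T)
    {Z g : ℝ → E} {τ : ℝ} (hZ : HasDerivAt Z (A τ (Z τ) + g τ) τ) (t : ℝ) :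
    HasDerivAt (fun r => T t r (Z r)) (T t τ (g τ)) τ := by
  convert (hT.hasDerivAt_snd t τ).clm_apply hZ using 1
  simp only [neg_apply, ContinuousLinearMap.comp_apply, map_add]
  abel

theorem apply_eq_add_integral [FiniteDimensional ℝ E]
    (hT : IsEvolutionOperator A T) {R : ℝ → E →L[ℝ] E}
    (hR : ∀ t s, (T t s).comp (R s) = (R t).comp (T t s)) {Z g : ℝ → E} {ω : ℝ → ℝ}
    (hZ : ∀ τ, HasDerivAt Z (A τ (Z τ) + g τ) τ) (hg : ∀ τ, ‖g τ‖ ≤ ω τ)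
    (hω : ∀ a b, IntervalIntegrable ω volume a b) (s t : ℝ) :
    R t (Z t) = (T t s).comp (R s) (Z s) + ∫ τ in s..t, (T t τ).comp (R τ) (g τ) := by
  have := FiniteDimensional.complete ℝ E
  have hderiv τ := hT.hasDerivAt_apply_snd (hZ τ) t
  have hint := intervalIntegrable_evolution_apply
    (continuous_iff_continuousAt.2 fun τ => (hT.hasDerivAt_snd t τ).continuousAt)
    hderiv (hω s t) hg
  rw [variation_of_constants hT.self hderiv hint, map_add,
    ← ContinuousLinearMap.intervalIntegral_comp_comm _ hint]
  simp only [hR, ContinuousLinearMap.comp_apply]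

end IsEvolutionOperator

end Evolution

section GrowthRate

variable {μ μ' : ℝ → ℝ}

theorem hasDerivAt_div_rpow_div {τ c p : ℝ} (hμ : HasDerivAt μ (μ' τ) τ) (hμτ : 0 < μ τ)
    (hc : 0 < c) (hp : p ≠ 0) :
    HasDerivAt (fun r => (μ r / c) ^ p / p) ((μ τ / c) ^ p * (μ' τ / μ τ)) τ := by
  refine (((hμ.div_const c).rpow_const (Or.inl (div_pos hμτ hc).ne')).div_const p).congr_deriv ?_
  rw [Real.rpow_sub_one (div_pos hμτ hc).ne']
  field_simp

theorem intervalIntegrable_logDeriv (hμ_pos : ∀ t, 0 < μ t)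
    (hμ_deriv : ∀ t, HasDerivAt μ (μ' t) t) (hμ' : ∀ t, 0 ≤ μ' t) (a b : ℝ) :
    IntervalIntegrable (fun τ => μ' τ / μ τ) volume a b :=
  intervalIntegrable_of_hasDerivAt_of_nonneg (fun τ => (hμ_deriv τ).log (hμ_pos τ).ne')
    (fun τ => div_nonneg (hμ' τ) (hμ_pos τ).le) a b

theorem intervalIntegrable_div_rpow_mul_logDeriv (hμ_pos : ∀ t, 0 < μ t)
    (hμ_deriv : ∀ t, HasDerivAt μ (μ' t) t) (hμ' : ∀ t, 0 ≤ μ' t) {c p : ℝ} (hc : 0 < c)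
    (hp : p ≠ 0) (a b : ℝ) :
    IntervalIntegrable (fun τ => (μ τ / c) ^ p * (μ' τ / μ τ)) volume a b :=
  intervalIntegrable_of_hasDerivAt_of_nonneg
    (fun τ => hasDerivAt_div_rpow_div (hμ_deriv τ) (hμ_pos τ) hc hp)
    (fun τ => mul_nonneg (Real.rpow_nonneg (div_pos (hμ_pos τ) hc).le _)
      (div_nonneg (hμ' τ) (hμ_pos τ).le)) a b

theorem integral_div_rpow_mul_logDeriv (hμ_pos : ∀ t, 0 < μ t)
    (hμ_deriv : ∀ t, HasDerivAt μ (μ' t) t) (hμ' : ∀ t, 0 ≤ μ' t) {c p : ℝ} (hc : 0 < c)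
    (hp : p ≠ 0) (a b : ℝ) :
    ∫ τ in a..b, (μ τ / c) ^ p * (μ' τ / μ τ) = ((μ b / c) ^ p - (μ a / c) ^ p) / p := by
  rw [intervalIntegral.integral_eq_sub_of_hasDerivAt
    (fun τ _ => hasDerivAt_div_rpow_div (hμ_deriv τ) (hμ_pos τ) hc hp)
    (intervalIntegrable_div_rpow_mul_logDeriv hμ_pos hμ_deriv hμ' hc hp a b), sub_div]

theorem norm_apply_le_of_dichotomy_bound {E : Type*} [NormedAddCommGroup E] [NormedSpace ℝ E]
    {T : ℝ → ℝ → E →L[ℝ] E} {R : ℝ → E →L[ℝ] E} {Z g : ℝ → E}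
    (hμ_pos : ∀ t, 0 < μ t) (hμ_deriv : ∀ t, HasDerivAt μ (μ' t) t) (hμ' : ∀ t, 0 ≤ μ' t)
    {K b c p : ℝ} (hK : 0 ≤ K) (hb : 0 ≤ b) (hp : p ≠ 0) {l : Filter ℝ} [l.NeBot] {t : ℝ}
    (hrep : ∀ s, R t (Z t) = (T t s).comp (R s) (Z s) + ∫ τ in s..t, (T t τ).comp (R τ) (g τ))
    (hZ : ∀ s, ‖Z s‖ ≤ c) (hg : ∀ τ, ‖g τ‖ ≤ b * (μ' τ / μ τ))
    (hdich : ∀ᶠ s in l, ∀ τ ∈ uIcc s t, ‖(T t τ).comp (R τ)‖ ≤ K * (μ τ / μ t) ^ p)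
    (hlim : Tendsto (fun s => (μ s / μ t) ^ p) l (𝓝 0)) :
    ‖R t (Z t)‖ ≤ K * b / |p| := by
  have hw τ : 0 ≤ K * (μ τ / μ t) ^ p :=
    mul_nonneg hK (Real.rpow_nonneg (div_pos (hμ_pos τ) (hμ_pos t)).le _)
  have hbound : ∀ᶠ s in l, ‖R t (Z t)‖ ≤
      K * c * (μ s / μ t) ^ p + K * b * |(1 - (μ s / μ t) ^ p) / p| := by
    filter_upwards [hdich] with s hs
    have hfree : ‖(T t s).comp (R s) (Z s)‖ ≤ K * c * (μ s / μ t) ^ p :=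
      calc _ ≤ ‖(T t s).comp (R s)‖ * ‖Z s‖ := ContinuousLinearMap.le_opNorm _ _
        _ ≤ K * (μ s / μ t) ^ p * c :=
          mul_le_mul (hs s left_mem_uIcc) (hZ s) (norm_nonneg _) (hw s)
        _ = K * c * (μ s / μ t) ^ p := by ring
    have hint := intervalIntegrable_div_rpow_mul_logDeriv hμ_pos hμ_deriv hμ' (hμ_pos t) hp s t
    have hval := integral_div_rpow_mul_logDeriv hμ_pos hμ_deriv hμ' (hμ_pos t) hp s t
    have hforced : ‖∫ τ in s..t, (T t τ).comp (R τ) (g τ)‖ ≤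
        K * b * |(1 - (μ s / μ t) ^ p) / p| :=
      calc _ ≤ |∫ τ in s..t, K * b * ((μ τ / μ t) ^ p * (μ' τ / μ τ))| := by
            refine intervalIntegral.norm_integral_le_abs_of_norm_le ?_ (hint.const_mul _)
            refine (ae_restrict_mem measurableSet_uIoc).mono fun τ hτ => ?_
            calc _ ≤ ‖(T t τ).comp (R τ)‖ * ‖g τ‖ := ContinuousLinearMap.le_opNorm _ _
              _ ≤ K * (μ τ / μ t) ^ p * (b * (μ' τ / μ τ)) :=
                mul_le_mul (hs τ (uIoc_subset_uIcc hτ)) (hg τ) (norm_nonneg _) (hw τ)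
              _ = _ := by ring
        _ = K * b * |(1 - (μ s / μ t) ^ p) / p| := by
          rw [intervalIntegral.integral_const_mul, hval, div_self (hμ_pos t).ne',
            Real.one_rpow, abs_mul, abs_of_nonneg (mul_nonneg hK hb)]
    rw [hrep s]
    exact (norm_add_le _ _).trans (add_le_add hfree hforced)
  have hlim' : Tendsto (fun s => K * c * (μ s / μ t) ^ p + K * b * |(1 - (μ s / μ t) ^ p) / p|)
      l (𝓝 (K * b / |p|)) := by
    have := (hlim.const_mul (K * c)).add
      ((((tendsto_const_nhds (x := (1 : ℝ))).sub hlim).div_const p).abs.const_mul (K * b))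
    simpa [abs_div, div_eq_mul_inv, mul_assoc] using this
  exact ge_of_tendsto hlim' hbound

end GrowthRate

section Dichotomy

variable {E : Type*} [NormedAddCommGroup E] [NormedSpace ℝ E]

structure HasAlgebraicDichotomy (μ : ℝ → ℝ) (T : ℝ → ℝ → E →L[ℝ] E) (P : ℝ → E →L[ℝ] E)
    (K α : ℝ) : Prop where
  comp_comm : ∀ t s, (T t s).comp (P s) = (P t).comp (T t s)
  norm_stable_le : ∀ t s, s ≤ t → ‖(T t s).comp (P s)‖ ≤ K * (μ t / μ s) ^ (-α)
  norm_unstable_le : ∀ t s, t ≤ s →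
    ‖(T t s).comp (ContinuousLinearMap.id ℝ E - P s)‖ ≤ K * (μ s / μ t) ^ (-α)

theorem HasAlgebraicDichotomy.norm_le_of_hasDerivAt [FiniteDimensional ℝ E]
    {A : ℝ → E →L[ℝ] E} {T : ℝ → ℝ → E →L[ℝ] E} {P : ℝ → E →L[ℝ] E} {μ μ' : ℝ → ℝ}
    {K α : ℝ} (hT : IsEvolutionOperator A T) (hD : HasAlgebraicDichotomy μ T P K α)
    (hK : 0 ≤ K) (hα : 0 < α) (hμ_pos : ∀ t, 0 < μ t) (hμ_deriv : ∀ t, HasDerivAt μ (μ' t) t)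
    (hμ' : ∀ t, 0 ≤ μ' t) (hμ_bot : Tendsto μ atBot (𝓝 0)) (hμ_top : Tendsto μ atTop atTop)
    {Z g : ℝ → E} {b c : ℝ} (hb : 0 ≤ b) (hZ : ∀ τ, HasDerivAt Z (A τ (Z τ) + g τ) τ)
    (hZc : ∀ t, ‖Z t‖ ≤ c) (hg : ∀ τ, ‖g τ‖ ≤ b * (μ' τ / μ τ)) (t : ℝ) :
    ‖Z t‖ ≤ 2 * K * b / α := by
  have hrep {R : ℝ → E →L[ℝ] E} hR := hT.apply_eq_add_integral (R := R) hR hZ hg fun a b =>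
    (intervalIntegrable_logDeriv hμ_pos hμ_deriv hμ' a b).const_mul _
  have hPZ : ‖P t (Z t)‖ ≤ K * b / |α| :=
    norm_apply_le_of_dichotomy_bound hμ_pos hμ_deriv hμ' hK hb hα.ne' (l := atBot)
      (fun s => hrep hD.comp_comm s t) hZc hg
      (eventually_atBot.2 ⟨t, fun s hs τ hτ => by
        simpa only [Real.rpow_neg_eq_inv_rpow, inv_div] using
          hD.norm_stable_le t τ (uIcc_of_le hs ▸ hτ).2⟩)
      (by simpa [Real.zero_rpow hα.ne'] using
        (hμ_bot.div_const (μ t)).rpow_const (Or.inr hα.le))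
  set Q : ℝ → E →L[ℝ] E := fun r => ContinuousLinearMap.id ℝ E - P r
  have hQ_comm t s : (T t s).comp (Q s) = (Q t).comp (T t s) := by
    simp only [Q, ContinuousLinearMap.comp_sub, ContinuousLinearMap.sub_comp, hD.comp_comm,
      ContinuousLinearMap.comp_id, ContinuousLinearMap.id_comp]
  have hQZ : ‖Q t (Z t)‖ ≤ K * b / |-α| :=
    norm_apply_le_of_dichotomy_bound hμ_pos hμ_deriv hμ' hK hb (neg_ne_zero.2 hα.ne')
      (l := atTop) (fun s => hrep hQ_comm s t) hZc hg
      (eventually_atTop.2 ⟨t, fun s hs τ hτ =>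
        hD.norm_unstable_le t τ (uIcc_of_ge hs ▸ hτ).1⟩)
      ((tendsto_rpow_neg_atTop hα).comp (hμ_top.atTop_div_const (hμ_pos t)))
  calc ‖Z t‖ = ‖P t (Z t) + Q t (Z t)‖ := by simp [Q]
    _ ≤ K * b / |α| + K * b / |-α| := (norm_add_le _ _).trans (add_le_add hPZ hQZ)
    _ = 2 * K * b / α := by rw [abs_neg, abs_of_pos hα]; ring

end Dichotomy

theorem eq_zero_of_forall_norm_le_mul_iSup {ι E : Type*} [NormedAddCommGroup E] {Z : ι → E}
    {θ : ℝ} (hZ : BddAbove (range fun t => ‖Z t‖)) (hθ : θ < 1)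
    (h : ∀ t, ‖Z t‖ ≤ θ * ⨆ t, ‖Z t‖) (t : ι) : Z t = 0 := by
  have : Nonempty ι := ⟨t⟩
  have hle : ‖Z t‖ ≤ ⨆ t, ‖Z t‖ := le_ciSup hZ t
  have : (⨆ t, ‖Z t‖) ≤ θ * ⨆ t, ‖Z t‖ := ciSup_le h
  exact norm_le_zero_iff.1 (hle.trans (by nlinarith [norm_nonneg (Z t)]))

theorem algebraic_dichotomy_zero_unique_bounded_solution_general {n : ℕ}
    (μ μ' : ℝ → ℝ)
    (hμ_pos : ∀ t, 0 < μ t)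
    (hμ_mono : StrictMono μ)
    (hμ_bot : Filter.Tendsto μ Filter.atBot (nhds 0))
    (hμ_top : Filter.Tendsto μ Filter.atTop Filter.atTop)
    (hμ_deriv : ∀ t, HasDerivAt μ (μ' t) t)
    (A : ℝ → EuclideanSpace ℝ (Fin n) →L[ℝ] EuclideanSpace ℝ (Fin n))
    (T : ℝ → ℝ → EuclideanSpace ℝ (Fin n) →L[ℝ] EuclideanSpace ℝ (Fin n))
    (hT_id : ∀ t, T t t = ContinuousLinearMap.id ℝ (EuclideanSpace ℝ (Fin n)))
    (hT_cocycle : ∀ t τ s, (T t τ).comp (T τ s) = T t s)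
    (hT_sol : ∀ s x₀ t, HasDerivAt (fun r => T r s x₀) (A t (T t s x₀)) t)
    (P : ℝ → EuclideanSpace ℝ (Fin n) →L[ℝ] EuclideanSpace ℝ (Fin n))
    (K α : ℝ) (hK : 0 < K) (hα : 0 < α)
    (h_commute : ∀ t s, (T t s).comp (P s) = (P t).comp (T t s))
    (h_dichP : ∀ t s, s ≤ t → ‖(T t s).comp (P s)‖ ≤ K * (μ t / μ s) ^ (-α))
    (h_dichQ : ∀ t s, t ≤ s →
      ‖(T t s).comp (ContinuousLinearMap.id ℝ (EuclideanSpace ℝ (Fin n)) - P s)‖ ≤ K * (μ s / μ t) ^ (-α))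
    (f : ℝ → EuclideanSpace ℝ (Fin n) → EuclideanSpace ℝ (Fin n))
    (γ : ℝ)
    (hf_lip : ∀ t x₁ x₂, ‖f t x₁ - f t x₂‖ ≤ γ * (μ' t / μ t) * ‖x₁ - x₂‖)
    (h_small : 6 * K * γ * α⁻¹ < 1)
    (x : ℝ → EuclideanSpace ℝ (Fin n)) :
    ∀ Z : ℝ → EuclideanSpace ℝ (Fin n),
      (∀ t, HasDerivAt Z (A t (Z t) + f t (x t + Z t) - f t (x t)) t) →
      (∃ C, ∀ t, ‖Z t‖ ≤ C) →
      ∀ t, Z t = 0 := by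
  intro Z hZ ⟨C, hC⟩
  have hZ_bdd : BddAbove (range fun t => ‖Z t‖) := ⟨C, by rintro _ ⟨t, rfl⟩; exact hC t⟩
  set c := ⨆ t, ‖Z t‖
  have hZc : ∀ t, ‖Z t‖ ≤ c := le_ciSup hZ_bdd
  have hμ' : ∀ t, 0 ≤ μ' t := fun t => (hμ_deriv t).deriv ▸ hμ_mono.monotone.deriv_nonneg
  have hρ : ∀ t, 0 ≤ μ' t / μ t := fun t => div_nonneg (hμ' t) (hμ_pos t).le
  have hg τ : ‖f τ (x τ + Z τ) - f τ (x τ)‖ ≤ max γ 0 * c * (μ' τ / μ τ) :=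
    calc _ ≤ γ * (μ' τ / μ τ) * ‖Z τ‖ := by
          simpa only [add_sub_cancel_left] using hf_lip τ (x τ + Z τ) (x τ)
      _ ≤ max γ 0 * (μ' τ / μ τ) * c :=
          mul_le_mul (mul_le_mul_of_nonneg_right (le_max_left _ _) (hρ τ)) (hZc τ)
            (norm_nonneg _) (mul_nonneg (le_max_right _ _) (hρ τ))
      _ = max γ 0 * c * (μ' τ / μ τ) := by ring
  have hθ : 2 * K * max γ 0 / α < 1 := by
    rcases le_total γ 0 with hγ | hγ
    · simp [max_eq_right hγ]
    · rw [max_eq_left hγ, div_eq_mul_inv]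
      nlinarith [mul_nonneg (mul_nonneg hK.le hγ) (inv_nonneg.2 hα.le)]
  refine eq_zero_of_forall_norm_le_mul_iSup hZ_bdd hθ fun t => ?_
  have hD : HasAlgebraicDichotomy μ T P K α := ⟨h_commute, h_dichP, h_dichQ⟩
  refine (hD.norm_le_of_hasDerivAt ⟨hT_id, hT_cocycle, hT_sol⟩ hK.le hα hμ_pos hμ_deriv hμ' hμ_bot
      hμ_top (mul_nonneg (le_max_right _ _) ((norm_nonneg _).trans (hZc 0)))
      (fun τ => by simpa only [add_sub_assoc] using hZ τ) hZc hg t).trans_eq ?_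
  ring

theorem algebraic_dichotomy_zero_unique_bounded_solution {n : ℕ}
    (μ μ' : ℝ → ℝ)
    (hμ_pos : ∀ t, 0 < μ t)
    (hμ_mono : StrictMono μ)
    (hμ_zero : μ 0 = 1)
    (hμ_bot : Filter.Tendsto μ Filter.atBot (nhds 0))
    (hμ_top : Filter.Tendsto μ Filter.atTop Filter.atTop)
    (hμ_deriv : ∀ t, HasDerivAt μ (μ' t) t)
    (A : ℝ → EuclideanSpace ℝ (Fin n) →L[ℝ] EuclideanSpace ℝ (Fin n))
    (hA_cont : Continuous A)
    (hA_bdd : ∃ C, ∀ t, ‖A t‖ ≤ C)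
    (T : ℝ → ℝ → EuclideanSpace ℝ (Fin n) →L[ℝ] EuclideanSpace ℝ (Fin n))
    (hT_id : ∀ t, T t t = ContinuousLinearMap.id ℝ (EuclideanSpace ℝ (Fin n)))
    (hT_cocycle : ∀ t τ s, (T t τ).comp (T τ s) = T t s)
    (hT_sol : ∀ s x₀ t, HasDerivAt (fun r => T r s x₀) (A t (T t s x₀)) t)
    (P : ℝ → EuclideanSpace ℝ (Fin n) →L[ℝ] EuclideanSpace ℝ (Fin n))
    (hP_proj : ∀ s, (P s).comp (P s) = P s)
    (K α : ℝ) (hK : 0 < K) (hα : 0 < α)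
    (h_commute : ∀ t s, (T t s).comp (P s) = (P t).comp (T t s))
    (h_dichP : ∀ t s, s ≤ t → ‖(T t s).comp (P s)‖ ≤ K * (μ t / μ s) ^ (-α))
    (h_dichQ : ∀ t s, t ≤ s →
      ‖(T t s).comp (ContinuousLinearMap.id ℝ (EuclideanSpace ℝ (Fin n)) - P s)‖ ≤ K * (μ s / μ t) ^ (-α))
    (f : ℝ → EuclideanSpace ℝ (Fin n) → EuclideanSpace ℝ (Fin n))
    (β γ : ℝ)
    (hf_bdd : ∀ t x, ‖f t x‖ ≤ β * (μ' t / μ t))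
    (hf_lip : ∀ t x₁ x₂, ‖f t x₁ - f t x₂‖ ≤ γ * (μ' t / μ t) * ‖x₁ - x₂‖)
    (h_small : 6 * K * γ * α⁻¹ < 1)
    (x : ℝ → EuclideanSpace ℝ (Fin n))
    (hx_sol : ∀ t, HasDerivAt x (A t (x t) + f t (x t)) t) :
    ∀ Z : ℝ → EuclideanSpace ℝ (Fin n),
      (∀ t, HasDerivAt Z (A t (Z t) + f t (x t + Z t) - f t (x t)) t) →
      (∃ C, ∀ t, ‖Z t‖ ≤ C) →
      ∀ t, Z t = 0 :=
  algebraic_dichotomy_zero_unique_bounded_solution_general μ μ' hμ_pos hμ_mono hμ_bot hμ_top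
    hμ_deriv A T hT_id hT_cocycle hT_sol P K α hK hα h_commute h_dichP h_dichQ f γ hf_lip h_small x
end

section
/- Under the hypotheses of the algebraic-dichotomy linearization theorem (algebraic dichotomy for x' = A(t)x with constants K, α; ‖f(t,x)‖ ≤ β μ'(t)/μ(t); ‖f(t,x₁) − f(t,x₂)‖ ≤ γ (μ'(t)/μ(t)) ‖x₁ − x₂‖; 6Kγα⁻¹ < 1), define H(t,x) = x + h(t,(t,x)), where h(·,(τ,ξ)) is the unique bounded solution of Z' = A(t)Z − f(t, X(t,τ,ξ)) and X(·,t₀,x₀) denotes the solution of x' = A(t)x + f(t,x) with value x₀ at t₀. Then for any (t₀, x₀) ∈ ℝ × ℝⁿ, the function t ↦ H(t, X(t,t₀,x₀)) is a solution of the linear system x' = A(t)x, and moreover H(t, X(t,t₀,x₀)) = X(t,t₀,x₀) + h(t,(t₀,x₀)). -/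
open MeasureTheory Filter Set

theorem H_maps_solutions_to_linear {n : ℕ}
    (μ μ' : ℝ → ℝ)
    (hμ_pos : ∀ t, 0 < μ t)
    (hμ_mono : StrictMono μ)
    (hμ_zero : μ 0 = 1)
    (hμ_bot : Filter.Tendsto μ Filter.atBot (nhds 0))
    (hμ_top : Filter.Tendsto μ Filter.atTop Filter.atTop)
    (hμ_deriv : ∀ t, HasDerivAt μ (μ' t) t)
    (A : ℝ → EuclideanSpace ℝ (Fin n) →L[ℝ] EuclideanSpace ℝ (Fin n))
    (hA_cont : Continuous A)
    (hA_bdd : ∃ C, ∀ t, ‖A t‖ ≤ C)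
    (T : ℝ → ℝ → EuclideanSpace ℝ (Fin n) →L[ℝ] EuclideanSpace ℝ (Fin n))
    (hT_id : ∀ t, T t t = ContinuousLinearMap.id ℝ (EuclideanSpace ℝ (Fin n)))
    (hT_cocycle : ∀ t τ s, (T t τ).comp (T τ s) = T t s)
    (hT_sol : ∀ s x₀ t, HasDerivAt (fun r => T r s x₀) (A t (T t s x₀)) t)
    (P : ℝ → EuclideanSpace ℝ (Fin n) →L[ℝ] EuclideanSpace ℝ (Fin n))
    (hP_proj : ∀ s, (P s).comp (P s) = P s)
    (K α : ℝ) (hK : 0 < K) (hα : 0 < α)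
    (h_commute : ∀ t s, (T t s).comp (P s) = (P t).comp (T t s))
    (h_dichP : ∀ t s, s ≤ t → ‖(T t s).comp (P s)‖ ≤ K * (μ t / μ s) ^ (-α))
    (h_dichQ : ∀ t s, t ≤ s →
      ‖(T t s).comp (ContinuousLinearMap.id ℝ (EuclideanSpace ℝ (Fin n)) - P s)‖ ≤ K * (μ s / μ t) ^ (-α))
    (f : ℝ → EuclideanSpace ℝ (Fin n) → EuclideanSpace ℝ (Fin n))
    (β γ : ℝ)
    (hf_bdd : ∀ t x, ‖f t x‖ ≤ β * (μ' t / μ t))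
    (hf_lip : ∀ t x₁ x₂, ‖f t x₁ - f t x₂‖ ≤ γ * (μ' t / μ t) * ‖x₁ - x₂‖)
    (h_small : 6 * K * γ * α⁻¹ < 1)
    (X : ℝ → ℝ → EuclideanSpace ℝ (Fin n) → EuclideanSpace ℝ (Fin n))
    (hX_init : ∀ τ ξ, X τ τ ξ = ξ)
    (hX_sol : ∀ τ ξ t, HasDerivAt (fun r => X r τ ξ) (A t (X t τ ξ) + f t (X t τ ξ)) t)
    (hX_flow : ∀ t s τ ξ, X t s (X s τ ξ) = X t τ ξ)
    (h : ℝ → ℝ → EuclideanSpace ℝ (Fin n) → EuclideanSpace ℝ (Fin n))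
    (hh_sol : ∀ τ ξ t, HasDerivAt (fun r => h r τ ξ) (A t (h t τ ξ) - f t (X t τ ξ)) t)
    (hh_bdd : ∀ τ ξ, ∃ C, ∀ t, ‖h t τ ξ‖ ≤ C)
    (hh_unique : ∀ τ ξ (z : ℝ → EuclideanSpace ℝ (Fin n)),
      (∀ t, HasDerivAt z (A t (z t) - f t (X t τ ξ)) t) →
      (∃ C, ∀ t, ‖z t‖ ≤ C) → ∀ t, z t = h t τ ξ)
    (H : ℝ → EuclideanSpace ℝ (Fin n) → EuclideanSpace ℝ (Fin n))
    (hH_def : ∀ t x, H t x = x + h t t x) :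
    ∀ t₀ x₀,
      (∀ t, HasDerivAt (fun r => H r (X r t₀ x₀)) (A t (H t (X t t₀ x₀))) t) ∧
      (∀ t, H t (X t t₀ x₀) = X t t₀ x₀ + h t t₀ x₀) := by
  intro t₀ x₀
  have key : ∀ t, h t t (X t t₀ x₀) = h t t₀ x₀ := by
    intro t
    have hu := hh_unique t (X t t₀ x₀) (fun s => h s t₀ x₀)
      (by
        intro s
        have hs := hh_sol t₀ x₀ s
        rwa [hX_flow s t t₀ x₀])
      (hh_bdd t₀ x₀) t
    exact hu.symm
  have heq : ∀ t, H t (X t t₀ x₀) = X t t₀ x₀ + h t t₀ x₀ := by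
    intro t
    rw [hH_def, key]
  refine ⟨?_, heq⟩
  intro t
  have hfun : (fun r => H r (X r t₀ x₀)) = fun r => X r t₀ x₀ + h r t₀ x₀ := by
    funext r; exact heq r
  rw [hfun]
  have hd := (hX_sol t₀ x₀ t).add (hh_sol t₀ x₀ t)
  have : A t (X t t₀ x₀) + f t (X t t₀ x₀) + (A t (h t t₀ x₀) - f t (X t t₀ x₀))
      = A t (H t (X t t₀ x₀)) := by
    rw [heq t, map_add]; abel
  rwa [this] at hd
end

section
/- Under the hypotheses of the algebraic-dichotomy linearization theorem (algebraic dichotomy for x' = A(t)x with constants K, α; ‖f(t,x)‖ ≤ β μ'(t)/μ(t); ‖f(t,x₁) − f(t,x₂)‖ ≤ γ (μ'(t)/μ(t)) ‖x₁ − x₂‖; 6Kγα⁻¹ < 1), define G(t,y) = y + g(t,(t,y)), where g(·,(τ,ξ)) is the unique bounded solution of Z' = A(t)Z + f(t, Y(t,τ,ξ) + Z) and Y(·,t₀,y₀) denotes the solution of x' = A(t)x with value y₀ at t₀. Then for any (t₀, y₀) ∈ ℝ × ℝⁿ, the function t ↦ G(t, Y(t,t₀,y₀)) is a solution of the nonlinear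 system x' = A(t)x + f(t,x), and moreover G(t, Y(t,t₀,y₀)) = Y(t,t₀,y₀) + g(t,(t₀,y₀)). -/
open MeasureTheory Filter Set

theorem G_maps_solutions_to_nonlinear {n : ℕ}
    (μ μ' : ℝ → ℝ)
    (hμ_pos : ∀ t, 0 < μ t)
    (hμ_mono : StrictMono μ)
    (hμ_zero : μ 0 = 1)
    (hμ_bot : Filter.Tendsto μ Filter.atBot (nhds 0))
    (hμ_top : Filter.Tendsto μ Filter.atTop Filter.atTop)
    (hμ_deriv : ∀ t, HasDerivAt μ (μ' t) t)
    (A : ℝ → EuclideanSpace ℝ (Fin n) →L[ℝ] EuclideanSpace ℝ (Fin n))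
    (hA_cont : Continuous A)
    (hA_bdd : ∃ C, ∀ t, ‖A t‖ ≤ C)
    (T : ℝ → ℝ → EuclideanSpace ℝ (Fin n) →L[ℝ] EuclideanSpace ℝ (Fin n))
    (hT_id : ∀ t, T t t = ContinuousLinearMap.id ℝ (EuclideanSpace ℝ (Fin n)))
    (hT_cocycle : ∀ t τ s, (T t τ).comp (T τ s) = T t s)
    (hT_sol : ∀ s x₀ t, HasDerivAt (fun r => T r s x₀) (A t (T t s x₀)) t)
    (P : ℝ → EuclideanSpace ℝ (Fin n) →L[ℝ] EuclideanSpace ℝ (Fin n))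
    (hP_proj : ∀ s, (P s).comp (P s) = P s)
    (K α : ℝ) (hK : 0 < K) (hα : 0 < α)
    (h_commute : ∀ t s, (T t s).comp (P s) = (P t).comp (T t s))
    (h_dichP : ∀ t s, s ≤ t → ‖(T t s).comp (P s)‖ ≤ K * (μ t / μ s) ^ (-α))
    (h_dichQ : ∀ t s, t ≤ s →
      ‖(T t s).comp (ContinuousLinearMap.id ℝ (EuclideanSpace ℝ (Fin n)) - P s)‖ ≤ K * (μ s / μ t) ^ (-α))
    (f : ℝ → EuclideanSpace ℝ (Fin n) → EuclideanSpace ℝ (Fin n))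
    (β γ : ℝ)
    (hf_bdd : ∀ t x, ‖f t x‖ ≤ β * (μ' t / μ t))
    (hf_lip : ∀ t x₁ x₂, ‖f t x₁ - f t x₂‖ ≤ γ * (μ' t / μ t) * ‖x₁ - x₂‖)
    (h_small : 6 * K * γ * α⁻¹ < 1)
    (Y : ℝ → ℝ → EuclideanSpace ℝ (Fin n) → EuclideanSpace ℝ (Fin n))
    (hY_init : ∀ τ ξ, Y τ τ ξ = ξ)
    (hY_sol : ∀ τ ξ t, HasDerivAt (fun r => Y r τ ξ) (A t (Y t τ ξ)) t)
    (hY_flow : ∀ t s τ ξ, Y t s (Y s τ ξ) = Y t τ ξ)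
    (g : ℝ → ℝ → EuclideanSpace ℝ (Fin n) → EuclideanSpace ℝ (Fin n))
    (hg_sol : ∀ τ ξ t, HasDerivAt (fun r => g r τ ξ) (A t (g t τ ξ) + f t (Y t τ ξ + g t τ ξ)) t)
    (hg_bdd : ∀ τ ξ, ∃ C, ∀ t, ‖g t τ ξ‖ ≤ C)
    (hg_unique : ∀ τ ξ (z : ℝ → EuclideanSpace ℝ (Fin n)),
      (∀ t, HasDerivAt z (A t (z t) + f t (Y t τ ξ + z t)) t) →
      (∃ C, ∀ t, ‖z t‖ ≤ C) → ∀ t, z t = g t τ ξ)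
    (G : ℝ → EuclideanSpace ℝ (Fin n) → EuclideanSpace ℝ (Fin n))
    (hG_def : ∀ t y, G t y = y + g t t y) :
    ∀ t₀ y₀,
      (∀ t, HasDerivAt (fun r => G r (Y r t₀ y₀))
        (A t (G t (Y t t₀ y₀)) + f t (G t (Y t t₀ y₀))) t) ∧
      (∀ t, G t (Y t t₀ y₀) = Y t t₀ y₀ + g t t₀ y₀) := by
  intro t₀ y₀
  -- key identity: g s s (Y s t₀ y₀) = g s t₀ y₀
  have key : ∀ s t, g t t₀ y₀ = g t s (Y s t₀ y₀) := by
    intro s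
    apply hg_unique s (Y s t₀ y₀) (fun t => g t t₀ y₀)
    · intro t
      have := hg_sol t₀ y₀ t
      rwa [hY_flow t s t₀ y₀]
    · exact hg_bdd t₀ y₀
  have hGeq : ∀ t, G t (Y t t₀ y₀) = Y t t₀ y₀ + g t t₀ y₀ := by
    intro t
    rw [hG_def, ← key t t]
  refine ⟨?_, hGeq⟩
  intro t
  have h1 : HasDerivAt (fun r => Y r t₀ y₀ + g r t₀ y₀)
      (A t (Y t t₀ y₀) + (A t (g t t₀ y₀) + f t (Y t t₀ y₀ + g t t₀ y₀))) t :=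
    (hY_sol t₀ y₀ t).add (hg_sol t₀ y₀ t)
  have hfun : (fun r => G r (Y r t₀ y₀)) = fun r => Y r t₀ y₀ + g r t₀ y₀ :=
    funext hGeq
  rw [hfun, hGeq t]
  convert h1 using 1
  rw [map_add]
  abel
end

section
/- Under the hypotheses of the algebraic-dichotomy linearization theorem (algebraic dichotomy for x' = A(t)x with constants K, α; ‖f(t,x)‖ ≤ β μ'(t)/μ(t); ‖f(t,x₁) − f(t,x₂)‖ ≤ γ (μ'(t)/μ(t)) ‖x₁ − x₂‖; 6Kγα⁻¹ < 1), define H(t,x) = x + h(t,(t,x)) and G(t,y) = y + g(t,(t,y)), where h(·,(τ,ξ)) is the unique bounded solution of Z' = A(t)Z − f(t, X(t,τ,ξ)) and g(·,(τ,ξ)) is the unique bounded solution of Z' = A(t)Z + f(t, Y(t,τ,ξ) + Z). Then H(t, G(t,y)) = y for every t ∈ ℝ and every y ∈ ℝⁿ. -/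
/-!
Put `ξ = G(τ, y) = y + g(τ, (τ, y))`. The function `Y(·, τ, y) + g(·, (τ, y))` solves the perturbed
equation `x' = A(t) x + f(t, x)` and equals `ξ` at `τ`. With `‖A(t)‖ ≤ C`, the map
`x ↦ A(t) x + f(t, x)` is Lipschitz with constant `C + γ μ'(t)/μ(t)`, whose antiderivative is
`t C + γ log μ(t)`, so a Gronwall argument shows that this function coincides with `X(·, τ, ξ)`.
Hence `-g(·, (τ, y))` is a bounded solution of `Z' = A(t) Z - f(t, X(t, τ, ξ))`, so it is
`h(·, (τ, ξ))`, and `H(τ, ξ) = ξ - g(τ, (τ, y)) = y`.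
-/

section Gronwall

variable {φ φ' L Λ : ℝ → ℝ}

lemma antitone_exp_neg_mul_of_deriv_le (hφ : ∀ t, HasDerivAt φ (φ' t) t)
    (hΛ : ∀ t, HasDerivAt Λ (L t) t) (hle : ∀ t, φ' t ≤ L t * φ t) :
    Antitone fun t => Real.exp (-Λ t) * φ t := by
  refine antitone_of_hasDerivAt_nonpos (fun t => ((hΛ t).neg.exp).mul (hφ t)) fun t => ?_
  have : Real.exp (-Λ t) * (φ' t - L t * φ t) ≤ 0 :=
    mul_nonpos_of_nonneg_of_nonpos (Real.exp_pos _).le (sub_nonpos.mpr (hle t))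
  simp only [Pi.zero_apply, Pi.neg_apply]
  linarith

lemma monotone_exp_mul_of_le_deriv (hφ : ∀ t, HasDerivAt φ (φ' t) t)
    (hΛ : ∀ t, HasDerivAt Λ (L t) t) (hle : ∀ t, -(L t * φ t) ≤ φ' t) :
    Monotone fun t => Real.exp (Λ t) * φ t := by
  refine monotone_of_hasDerivAt_nonneg (fun t => ((hΛ t).exp).mul (hφ t)) fun t => ?_
  have : 0 ≤ Real.exp (Λ t) * (φ' t + L t * φ t) :=
    mul_nonneg (Real.exp_pos _).le (by linarith [hle t])
  simp only [Pi.zero_apply]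
  linarith

/-- The rate `L` enters only through an antiderivative `Λ`, so it need not be continuous or
integrable (`μ'` need not be). -/
lemma eq_zero_of_abs_deriv_le_mul (hφ : ∀ t, HasDerivAt φ (φ' t) t)
    (hΛ : ∀ t, HasDerivAt Λ (L t) t) (hφ_nonneg : ∀ t, 0 ≤ φ t)
    (hb : ∀ t, |φ' t| ≤ L t * φ t) {τ : ℝ} (hτ : φ τ = 0) (t : ℝ) : φ t = 0 := by
  refine le_antisymm ?_ (hφ_nonneg t)
  rcases le_total τ t with hτt | htτ
  · have := antitone_exp_neg_mul_of_deriv_le hφ hΛ (fun s => (abs_le.mp (hb s)).2) hτt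
    simp only [hτ, mul_zero] at this
    exact nonpos_of_mul_nonpos_right this (Real.exp_pos _)
  · have := monotone_exp_mul_of_le_deriv hφ hΛ (fun s => (abs_le.mp (hb s)).1) htτ
    simp only [hτ, mul_zero] at this
    exact nonpos_of_mul_nonpos_right this (Real.exp_pos _)

end Gronwall

section Uniqueness

variable {E : Type*} [NormedAddCommGroup E] [InnerProductSpace ℝ E] {L Λ : ℝ → ℝ}

lemma eq_zero_of_norm_deriv_le_mul {d d' : ℝ → E} (hd : ∀ t, HasDerivAt d (d' t) t)
    (hΛ : ∀ t, HasDerivAt Λ (L t) t) (hb : ∀ t, ‖d' t‖ ≤ L t * ‖d t‖) {τ : ℝ} (hτ : d τ = 0)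
    (t : ℝ) : d t = 0 := by
  have hsq : ∀ s, |2 * inner ℝ (d s) (d' s)| ≤ 2 * L s * ‖d s‖ ^ 2 := fun s =>
    calc |2 * inner ℝ (d s) (d' s)| = 2 * |inner ℝ (d s) (d' s)| := by
          rw [abs_mul, abs_two]
      _ ≤ 2 * (‖d s‖ * (L s * ‖d s‖)) := by
          gcongr
          exact (abs_real_inner_le_norm _ _).trans (by gcongr; exact hb s)
      _ = 2 * L s * ‖d s‖ ^ 2 := by ring
  have := eq_zero_of_abs_deriv_le_mul (φ := (‖d ·‖ ^ 2)) (fun s => (hd s).norm_sq)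
    (fun s => (hΛ s).const_mul 2) (fun s => by positivity) hsq (τ := τ) (by simp [hτ]) t
  simpa using this

lemma eq_of_hasDerivAt_of_norm_sub_le {F : ℝ → E → E} {x y : ℝ → E}
    (hF : ∀ t a b, ‖F t a - F t b‖ ≤ L t * ‖a - b‖) (hΛ : ∀ t, HasDerivAt Λ (L t) t)
    (hx : ∀ t, HasDerivAt x (F t (x t)) t) (hy : ∀ t, HasDerivAt y (F t (y t)) t)
    {τ : ℝ} (hτ : x τ = y τ) (t : ℝ) : x t = y t :=
  sub_eq_zero.mp <| eq_zero_of_norm_deriv_le_mul (fun s => (hx s).sub (hy s)) hΛ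
    (fun s => hF s _ _) (sub_eq_zero.mpr hτ) t

end Uniqueness

theorem H_comp_G_eq_id_general {n : ℕ}
    (μ μ' : ℝ → ℝ)
    (hμ_pos : ∀ t, 0 < μ t)
    (hμ_deriv : ∀ t, HasDerivAt μ (μ' t) t)
    (A : ℝ → EuclideanSpace ℝ (Fin n) →L[ℝ] EuclideanSpace ℝ (Fin n))
    (hA_bdd : ∃ C, ∀ t, ‖A t‖ ≤ C)
    (f : ℝ → EuclideanSpace ℝ (Fin n) → EuclideanSpace ℝ (Fin n))
    (γ : ℝ)
    (hf_lip : ∀ t x₁ x₂, ‖f t x₁ - f t x₂‖ ≤ γ * (μ' t / μ t) * ‖x₁ - x₂‖)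
    (X : ℝ → ℝ → EuclideanSpace ℝ (Fin n) → EuclideanSpace ℝ (Fin n))
    (hX_init : ∀ τ ξ, X τ τ ξ = ξ)
    (hX_sol : ∀ τ ξ t, HasDerivAt (fun r => X r τ ξ) (A t (X t τ ξ) + f t (X t τ ξ)) t)
    (Y : ℝ → ℝ → EuclideanSpace ℝ (Fin n) → EuclideanSpace ℝ (Fin n))
    (hY_init : ∀ τ ξ, Y τ τ ξ = ξ)
    (hY_sol : ∀ τ ξ t, HasDerivAt (fun r => Y r τ ξ) (A t (Y t τ ξ)) t)
    (h : ℝ → ℝ → EuclideanSpace ℝ (Fin n) → EuclideanSpace ℝ (Fin n))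
    (hh_unique : ∀ τ ξ (z : ℝ → EuclideanSpace ℝ (Fin n)),
      (∀ t, HasDerivAt z (A t (z t) - f t (X t τ ξ)) t) →
      (∃ C, ∀ t, ‖z t‖ ≤ C) → ∀ t, z t = h t τ ξ)
    (g : ℝ → ℝ → EuclideanSpace ℝ (Fin n) → EuclideanSpace ℝ (Fin n))
    (hg_sol : ∀ τ ξ t, HasDerivAt (fun r => g r τ ξ) (A t (g t τ ξ) + f t (Y t τ ξ + g t τ ξ)) t)
    (hg_bdd : ∀ τ ξ, ∃ C, ∀ t, ‖g t τ ξ‖ ≤ C)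
    (H G : ℝ → EuclideanSpace ℝ (Fin n) → EuclideanSpace ℝ (Fin n))
    (hH_def : ∀ t x, H t x = x + h t t x)
    (hG_def : ∀ t y, G t y = y + g t t y) :
    ∀ t y, H t (G t y) = y := by
  intro τ y
  obtain ⟨C, hC⟩ := hA_bdd
  set ξ := y + g τ τ y
  have hΛ : ∀ t, HasDerivAt (fun s => s * C + γ * Real.log (μ s)) (C + γ * (μ' t / μ t)) t :=
    fun t => (hasDerivAt_mul_const C).fun_add (((hμ_deriv t).log (hμ_pos t).ne').const_mul γ)
  have hF : ∀ t a b, ‖(A t a + f t a) - (A t b + f t b)‖ ≤ (C + γ * (μ' t / μ t)) * ‖a - b‖ :=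
    fun t a b => calc
      _ = ‖A t (a - b) + (f t a - f t b)‖ := by rw [map_sub]; abel_nf
      _ ≤ C * ‖a - b‖ + γ * (μ' t / μ t) * ‖a - b‖ :=
        (norm_add_le _ _).trans (add_le_add ((A t).le_of_opNorm_le (hC t) _) (hf_lip t a b))
      _ = _ := by ring
  have hYg : ∀ t, HasDerivAt (fun r => Y r τ y + g r τ y)
      (A t (Y t τ y + g t τ y) + f t (Y t τ y + g t τ y)) t := fun t =>
    ((hY_sol τ y t).add (hg_sol τ y t)).congr_deriv (by rw [map_add]; abel)
  have hflow : ∀ t, X t τ ξ = Y t τ y + g t τ y :=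
    eq_of_hasDerivAt_of_norm_sub_le hF hΛ (hX_sol τ ξ) hYg (τ := τ) (by rw [hX_init, hY_init])
  have hneg_g : ∀ t, HasDerivAt (fun r => -g r τ y) (A t (-g t τ y) - f t (X t τ ξ)) t :=
    fun t => (hg_sol τ y t).neg.congr_deriv (by rw [hflow t, map_neg]; abel)
  obtain ⟨C', hC'⟩ := hg_bdd τ y
  have hh : h τ τ ξ = -g τ τ y :=
    (hh_unique τ ξ _ hneg_g ⟨C', fun t => by simpa using hC' t⟩ τ).symm
  rw [hG_def, hH_def, hh]
  abel

theorem H_comp_G_eq_id {n : ℕ}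
    (μ μ' : ℝ → ℝ)
    (hμ_pos : ∀ t, 0 < μ t)
    (hμ_mono : StrictMono μ)
    (hμ_zero : μ 0 = 1)
    (hμ_bot : Filter.Tendsto μ Filter.atBot (nhds 0))
    (hμ_top : Filter.Tendsto μ Filter.atTop Filter.atTop)
    (hμ_deriv : ∀ t, HasDerivAt μ (μ' t) t)
    (A : ℝ → EuclideanSpace ℝ (Fin n) →L[ℝ] EuclideanSpace ℝ (Fin n))
    (hA_cont : Continuous A)
    (hA_bdd : ∃ C, ∀ t, ‖A t‖ ≤ C)
    (T : ℝ → ℝ → EuclideanSpace ℝ (Fin n) →L[ℝ] EuclideanSpace ℝ (Fin n))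
    (hT_id : ∀ t, T t t = ContinuousLinearMap.id ℝ (EuclideanSpace ℝ (Fin n)))
    (hT_cocycle : ∀ t τ s, (T t τ).comp (T τ s) = T t s)
    (hT_sol : ∀ s x₀ t, HasDerivAt (fun r => T r s x₀) (A t (T t s x₀)) t)
    (P : ℝ → EuclideanSpace ℝ (Fin n) →L[ℝ] EuclideanSpace ℝ (Fin n))
    (hP_proj : ∀ s, (P s).comp (P s) = P s)
    (K α : ℝ) (hK : 0 < K) (hα : 0 < α)
    (h_commute : ∀ t s, (T t s).comp (P s) = (P t).comp (T t s))
    (h_dichP : ∀ t s, s ≤ t → ‖(T t s).comp (P s)‖ ≤ K * (μ t / μ s) ^ (-α))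
    (h_dichQ : ∀ t s, t ≤ s →
      ‖(T t s).comp (ContinuousLinearMap.id ℝ (EuclideanSpace ℝ (Fin n)) - P s)‖ ≤ K * (μ s / μ t) ^ (-α))
    (f : ℝ → EuclideanSpace ℝ (Fin n) → EuclideanSpace ℝ (Fin n))
    (β γ : ℝ)
    (hf_bdd : ∀ t x, ‖f t x‖ ≤ β * (μ' t / μ t))
    (hf_lip : ∀ t x₁ x₂, ‖f t x₁ - f t x₂‖ ≤ γ * (μ' t / μ t) * ‖x₁ - x₂‖)
    (h_small : 6 * K * γ * α⁻¹ < 1)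
    (X : ℝ → ℝ → EuclideanSpace ℝ (Fin n) → EuclideanSpace ℝ (Fin n))
    (hX_init : ∀ τ ξ, X τ τ ξ = ξ)
    (hX_sol : ∀ τ ξ t, HasDerivAt (fun r => X r τ ξ) (A t (X t τ ξ) + f t (X t τ ξ)) t)
    (hX_flow : ∀ t s τ ξ, X t s (X s τ ξ) = X t τ ξ)
    (Y : ℝ → ℝ → EuclideanSpace ℝ (Fin n) → EuclideanSpace ℝ (Fin n))
    (hY_init : ∀ τ ξ, Y τ τ ξ = ξ)
    (hY_sol : ∀ τ ξ t, HasDerivAt (fun r => Y r τ ξ) (A t (Y t τ ξ)) t)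
    (hY_flow : ∀ t s τ ξ, Y t s (Y s τ ξ) = Y t τ ξ)
    (h : ℝ → ℝ → EuclideanSpace ℝ (Fin n) → EuclideanSpace ℝ (Fin n))
    (hh_sol : ∀ τ ξ t, HasDerivAt (fun r => h r τ ξ) (A t (h t τ ξ) - f t (X t τ ξ)) t)
    (hh_bdd : ∀ τ ξ, ∃ C, ∀ t, ‖h t τ ξ‖ ≤ C)
    (hh_unique : ∀ τ ξ (z : ℝ → EuclideanSpace ℝ (Fin n)),
      (∀ t, HasDerivAt z (A t (z t) - f t (X t τ ξ)) t) →
      (∃ C, ∀ t, ‖z t‖ ≤ C) → ∀ t, z t = h t τ ξ)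
    (g : ℝ → ℝ → EuclideanSpace ℝ (Fin n) → EuclideanSpace ℝ (Fin n))
    (hg_sol : ∀ τ ξ t, HasDerivAt (fun r => g r τ ξ) (A t (g t τ ξ) + f t (Y t τ ξ + g t τ ξ)) t)
    (hg_bdd : ∀ τ ξ, ∃ C, ∀ t, ‖g t τ ξ‖ ≤ C)
    (hg_unique : ∀ τ ξ (z : ℝ → EuclideanSpace ℝ (Fin n)),
      (∀ t, HasDerivAt z (A t (z t) + f t (Y t τ ξ + z t)) t) →
      (∃ C, ∀ t, ‖z t‖ ≤ C) → ∀ t, z t = g t τ ξ)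
    (H G : ℝ → EuclideanSpace ℝ (Fin n) → EuclideanSpace ℝ (Fin n))
    (hH_def : ∀ t x, H t x = x + h t t x)
    (hG_def : ∀ t y, G t y = y + g t t y) :
    ∀ t y, H t (G t y) = y :=
  H_comp_G_eq_id_general μ μ' hμ_pos hμ_deriv A hA_bdd f γ hf_lip X hX_init hX_sol Y hY_init hY_sol
    h hh_unique g hg_sol hg_bdd H G hH_def hG_def
end

section
/- Under the hypotheses of the algebraic-dichotomy linearization theorem (algebraic dichotomy for x' = A(t)x with constants K, α; ‖f(t,x)‖ ≤ β μ'(t)/μ(t); ‖f(t,x₁) − f(t,x₂)‖ ≤ γ (μ'(t)/μ(t)) ‖x₁ − x₂‖; 6Kγα⁻¹ < 1), define H(t,x) = x + h(t,(t,x)) and G(t,y) = y + g(t,(t,y)), where h(·,(τ,ξ)) is the unique bounded solution of Z' = A(t)Z − f(t, X(t,τ,ξ)) and g(·,(τ,ξ)) is the unique bounded solution of Z' = A(t)Z + f(t, Y(t,τ,ξ) + Z). Then G(t, H(t,x)) = x for every t ∈ ℝ and every x ∈ ℝⁿ. -/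
/-!
Both `Y(·, τ, H(τ, ξ))` and `X(·, τ, ξ) + h(·, τ, ξ)` solve the linear equation `x' = A(t) x` with
the same value `ξ + h(τ, τ, ξ)` at `τ`, so they coincide. Hence `-h(·, τ, ξ)` is a bounded solution of
`Z' = A(t) Z + f(t, Y(t, τ, H(τ, ξ)) + Z)`, so it is `g(·, τ, H(τ, ξ))`, and
`G(τ, H(τ, ξ)) = H(τ, ξ) - h(τ, τ, ξ) = ξ`.
-/

theorem eq_of_hasDerivAt_clm_apply_of_bounded {E : Type*} [NormedAddCommGroup E]
    [NormedSpace ℝ E] {A : ℝ → E →L[ℝ] E} {C : ℝ} (hA : ∀ t, ‖A t‖ ≤ C) {x y : ℝ → E}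
    (hx : ∀ t, HasDerivAt x (A t (x t)) t) (hy : ∀ t, HasDerivAt y (A t (y t)) t)
    {t₀ : ℝ} (h₀ : x t₀ = y t₀) : x = y := by
  have hlip : ∀ t, LipschitzOnWith C.toNNReal (A t) Set.univ := fun t =>
    ((A t).lipschitz.weaken <| by
      rw [← NNReal.coe_le_coe]; exact (hA t).trans (Real.le_coe_toNNReal C)).lipschitzOnWith
  exact ODE_solution_unique_univ (v := fun t => A t) hlip (fun t => ⟨hx t, trivial⟩)
    (fun t => ⟨hy t, trivial⟩) h₀

theorem G_comp_H_eq_id_general {n : ℕ}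
    (A : ℝ → EuclideanSpace ℝ (Fin n) →L[ℝ] EuclideanSpace ℝ (Fin n))
    (hA_bdd : ∃ C, ∀ t, ‖A t‖ ≤ C)
    (f : ℝ → EuclideanSpace ℝ (Fin n) → EuclideanSpace ℝ (Fin n))
    (X : ℝ → ℝ → EuclideanSpace ℝ (Fin n) → EuclideanSpace ℝ (Fin n))
    (hX_init : ∀ τ ξ, X τ τ ξ = ξ)
    (hX_sol : ∀ τ ξ t, HasDerivAt (fun r => X r τ ξ) (A t (X t τ ξ) + f t (X t τ ξ)) t)
    (Y : ℝ → ℝ → EuclideanSpace ℝ (Fin n) → EuclideanSpace ℝ (Fin n))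
    (hY_init : ∀ τ ξ, Y τ τ ξ = ξ)
    (hY_sol : ∀ τ ξ t, HasDerivAt (fun r => Y r τ ξ) (A t (Y t τ ξ)) t)
    (h : ℝ → ℝ → EuclideanSpace ℝ (Fin n) → EuclideanSpace ℝ (Fin n))
    (hh_sol : ∀ τ ξ t, HasDerivAt (fun r => h r τ ξ) (A t (h t τ ξ) - f t (X t τ ξ)) t)
    (hh_bdd : ∀ τ ξ, ∃ C, ∀ t, ‖h t τ ξ‖ ≤ C)
    (g : ℝ → ℝ → EuclideanSpace ℝ (Fin n) → EuclideanSpace ℝ (Fin n))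
    (hg_unique : ∀ τ ξ (z : ℝ → EuclideanSpace ℝ (Fin n)),
      (∀ t, HasDerivAt z (A t (z t) + f t (Y t τ ξ + z t)) t) →
      (∃ C, ∀ t, ‖z t‖ ≤ C) → ∀ t, z t = g t τ ξ)
    (H G : ℝ → EuclideanSpace ℝ (Fin n) → EuclideanSpace ℝ (Fin n))
    (hH_def : ∀ t x, H t x = x + h t t x)
    (hG_def : ∀ t y, G t y = y + g t t y) :
    ∀ t x, G t (H t x) = x := by
  intro τ ξ
  obtain ⟨C, hC⟩ := hA_bdd
  have hY : (fun t => Y t τ (H τ ξ)) = fun t => X t τ ξ + h t τ ξ := by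
    refine eq_of_hasDerivAt_clm_apply_of_bounded hC (hY_sol τ (H τ ξ)) (fun t => ?_) (t₀ := τ) ?_
    · refine ((hX_sol τ ξ t).add (hh_sol τ ξ t)).congr_deriv ?_
      rw [map_add]; abel
    · rw [hY_init, hX_init, hH_def]
  have hg : ∀ t, -h t τ ξ = g t τ (H τ ξ) := by
    refine hg_unique τ (H τ ξ) _ (fun t => (hh_sol τ ξ t).neg.congr_deriv ?_) ?_
    · rw [congrFun hY t, add_neg_cancel_right, map_neg]; abel
    · obtain ⟨C', hC'⟩ := hh_bdd τ ξ
      exact ⟨C', fun t => (norm_neg (h t τ ξ)).trans_le (hC' t)⟩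
  rw [hG_def, ← hg τ, hH_def, add_neg_cancel_right]

theorem G_comp_H_eq_id {n : ℕ}
    (μ μ' : ℝ → ℝ)
    (hμ_pos : ∀ t, 0 < μ t)
    (hμ_mono : StrictMono μ)
    (hμ_zero : μ 0 = 1)
    (hμ_bot : Filter.Tendsto μ Filter.atBot (nhds 0))
    (hμ_top : Filter.Tendsto μ Filter.atTop Filter.atTop)
    (hμ_deriv : ∀ t, HasDerivAt μ (μ' t) t)
    (A : ℝ → EuclideanSpace ℝ (Fin n) →L[ℝ] EuclideanSpace ℝ (Fin n))
    (hA_cont : Continuous A)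
    (hA_bdd : ∃ C, ∀ t, ‖A t‖ ≤ C)
    (T : ℝ → ℝ → EuclideanSpace ℝ (Fin n) →L[ℝ] EuclideanSpace ℝ (Fin n))
    (hT_id : ∀ t, T t t = ContinuousLinearMap.id ℝ (EuclideanSpace ℝ (Fin n)))
    (hT_cocycle : ∀ t τ s, (T t τ).comp (T τ s) = T t s)
    (hT_sol : ∀ s x₀ t, HasDerivAt (fun r => T r s x₀) (A t (T t s x₀)) t)
    (P : ℝ → EuclideanSpace ℝ (Fin n) →L[ℝ] EuclideanSpace ℝ (Fin n))
    (hP_proj : ∀ s, (P s).comp (P s) = P s)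
    (K α : ℝ) (hK : 0 < K) (hα : 0 < α)
    (h_commute : ∀ t s, (T t s).comp (P s) = (P t).comp (T t s))
    (h_dichP : ∀ t s, s ≤ t → ‖(T t s).comp (P s)‖ ≤ K * (μ t / μ s) ^ (-α))
    (h_dichQ : ∀ t s, t ≤ s →
      ‖(T t s).comp (ContinuousLinearMap.id ℝ (EuclideanSpace ℝ (Fin n)) - P s)‖ ≤ K * (μ s / μ t) ^ (-α))
    (f : ℝ → EuclideanSpace ℝ (Fin n) → EuclideanSpace ℝ (Fin n))
    (β γ : ℝ)
    (hf_bdd : ∀ t x, ‖f t x‖ ≤ β * (μ' t / μ t))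
    (hf_lip : ∀ t x₁ x₂, ‖f t x₁ - f t x₂‖ ≤ γ * (μ' t / μ t) * ‖x₁ - x₂‖)
    (h_small : 6 * K * γ * α⁻¹ < 1)
    (X : ℝ → ℝ → EuclideanSpace ℝ (Fin n) → EuclideanSpace ℝ (Fin n))
    (hX_init : ∀ τ ξ, X τ τ ξ = ξ)
    (hX_sol : ∀ τ ξ t, HasDerivAt (fun r => X r τ ξ) (A t (X t τ ξ) + f t (X t τ ξ)) t)
    (hX_flow : ∀ t s τ ξ, X t s (X s τ ξ) = X t τ ξ)
    (Y : ℝ → ℝ → EuclideanSpace ℝ (Fin n) → EuclideanSpace ℝ (Fin n))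
    (hY_init : ∀ τ ξ, Y τ τ ξ = ξ)
    (hY_sol : ∀ τ ξ t, HasDerivAt (fun r => Y r τ ξ) (A t (Y t τ ξ)) t)
    (hY_flow : ∀ t s τ ξ, Y t s (Y s τ ξ) = Y t τ ξ)
    (h : ℝ → ℝ → EuclideanSpace ℝ (Fin n) → EuclideanSpace ℝ (Fin n))
    (hh_sol : ∀ τ ξ t, HasDerivAt (fun r => h r τ ξ) (A t (h t τ ξ) - f t (X t τ ξ)) t)
    (hh_bdd : ∀ τ ξ, ∃ C, ∀ t, ‖h t τ ξ‖ ≤ C)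
    (hh_unique : ∀ τ ξ (z : ℝ → EuclideanSpace ℝ (Fin n)),
      (∀ t, HasDerivAt z (A t (z t) - f t (X t τ ξ)) t) →
      (∃ C, ∀ t, ‖z t‖ ≤ C) → ∀ t, z t = h t τ ξ)
    (g : ℝ → ℝ → EuclideanSpace ℝ (Fin n) → EuclideanSpace ℝ (Fin n))
    (hg_sol : ∀ τ ξ t, HasDerivAt (fun r => g r τ ξ) (A t (g t τ ξ) + f t (Y t τ ξ + g t τ ξ)) t)
    (hg_bdd : ∀ τ ξ, ∃ C, ∀ t, ‖g t τ ξ‖ ≤ C)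
    (hg_unique : ∀ τ ξ (z : ℝ → EuclideanSpace ℝ (Fin n)),
      (∀ t, HasDerivAt z (A t (z t) + f t (Y t τ ξ + z t)) t) →
      (∃ C, ∀ t, ‖z t‖ ≤ C) → ∀ t, z t = g t τ ξ)
    (H G : ℝ → EuclideanSpace ℝ (Fin n) → EuclideanSpace ℝ (Fin n))
    (hH_def : ∀ t x, H t x = x + h t t x)
    (hG_def : ∀ t y, G t y = y + g t t y) :
    ∀ t x, G t (H t x) = x :=
  G_comp_H_eq_id_general A hA_bdd f X hX_init hX_sol Y hY_init hY_sol h hh_sol hh_bdd g hg_unique H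
    G hH_def hG_def
end

section
/- Under the hypotheses of the algebraic-dichotomy linearization theorem, with g₀(t,(τ,ξ)) ≡ 0 and g_{m+1}(t,(τ,ξ)) = ∫_{−∞}^{t} T(t,s)P(s) f(s, Y(s,τ,ξ) + g_m(s,(τ,ξ))) ds − ∫_{t}^{+∞} T(t,s)Q(s) f(s, Y(s,τ,ξ) + g_m(s,(τ,ξ))) ds, the iterates satisfy the invariance identity g_m(t,(τ,ξ)) = g_m(t,(t, Y(t,τ,ξ))) for every m ≥ 0 and all t, τ ∈ ℝ, ξ ∈ ℝⁿ. -/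
open MeasureTheory Filter Set

theorem picard_iterates_invariance {n : ℕ}
    (μ μ' : ℝ → ℝ)
    (hμ_pos : ∀ t, 0 < μ t)
    (hμ_mono : StrictMono μ)
    (hμ_zero : μ 0 = 1)
    (hμ_bot : Filter.Tendsto μ Filter.atBot (nhds 0))
    (hμ_top : Filter.Tendsto μ Filter.atTop Filter.atTop)
    (hμ_deriv : ∀ t, HasDerivAt μ (μ' t) t)
    (A : ℝ → EuclideanSpace ℝ (Fin n) →L[ℝ] EuclideanSpace ℝ (Fin n))
    (hA_cont : Continuous A)
    (hA_bdd : ∃ C, ∀ t, ‖A t‖ ≤ C)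
    (T : ℝ → ℝ → EuclideanSpace ℝ (Fin n) →L[ℝ] EuclideanSpace ℝ (Fin n))
    (hT_id : ∀ t, T t t = ContinuousLinearMap.id ℝ (EuclideanSpace ℝ (Fin n)))
    (hT_cocycle : ∀ t τ s, (T t τ).comp (T τ s) = T t s)
    (hT_sol : ∀ s x₀ t, HasDerivAt (fun r => T r s x₀) (A t (T t s x₀)) t)
    (P : ℝ → EuclideanSpace ℝ (Fin n) →L[ℝ] EuclideanSpace ℝ (Fin n))
    (hP_proj : ∀ s, (P s).comp (P s) = P s)
    (K α : ℝ) (hK : 0 < K) (hα : 0 < α)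
    (h_commute : ∀ t s, (T t s).comp (P s) = (P t).comp (T t s))
    (h_dichP : ∀ t s, s ≤ t → ‖(T t s).comp (P s)‖ ≤ K * (μ t / μ s) ^ (-α))
    (h_dichQ : ∀ t s, t ≤ s →
      ‖(T t s).comp (ContinuousLinearMap.id ℝ (EuclideanSpace ℝ (Fin n)) - P s)‖ ≤ K * (μ s / μ t) ^ (-α))
    (f : ℝ → EuclideanSpace ℝ (Fin n) → EuclideanSpace ℝ (Fin n))
    (β γ : ℝ)
    (hf_bdd : ∀ t x, ‖f t x‖ ≤ β * (μ' t / μ t))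
    (hf_lip : ∀ t x₁ x₂, ‖f t x₁ - f t x₂‖ ≤ γ * (μ' t / μ t) * ‖x₁ - x₂‖)
    (h_small : 6 * K * γ * α⁻¹ < 1)
    (Y : ℝ → ℝ → EuclideanSpace ℝ (Fin n) → EuclideanSpace ℝ (Fin n))
    (hY_init : ∀ τ ξ, Y τ τ ξ = ξ)
    (hY_sol : ∀ τ ξ t, HasDerivAt (fun r => Y r τ ξ) (A t (Y t τ ξ)) t)
    (hY_flow : ∀ t s τ ξ, Y t s (Y s τ ξ) = Y t τ ξ)
    (gseq : ℕ → ℝ → ℝ → EuclideanSpace ℝ (Fin n) → EuclideanSpace ℝ (Fin n))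
    (hg0 : ∀ t τ ξ, gseq 0 t τ ξ = 0)
    (hgrec : ∀ m t τ ξ, gseq (m + 1) t τ ξ =
      (∫ s in Set.Iic t, (T t s) ((P s) (f s (Y s τ ξ + gseq m s τ ξ)))) -
      ∫ s in Set.Ici t,
        (T t s) ((ContinuousLinearMap.id ℝ (EuclideanSpace ℝ (Fin n)) - P s) (f s (Y s τ ξ + gseq m s τ ξ))))
    :
    ∀ m : ℕ, ∀ t τ ξ, gseq m t τ ξ = gseq m t t (Y t τ ξ) := by
  intro m
  induction m with
  | zero => intro t τ ξ; rw [hg0, hg0]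
  | succ m ih =>
    intro t τ ξ
    have key : ∀ s, Y s t (Y t τ ξ) + gseq m s t (Y t τ ξ) = Y s τ ξ + gseq m s τ ξ := by
      intro s
      rw [hY_flow, ih s t (Y t τ ξ), hY_flow, ← ih s τ ξ]
    rw [hgrec, hgrec]
    congr 1 <;> exact integral_congr_ae (Filter.Eventually.of_forall fun s => by simp only [key])
end
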